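/- Let V, W, Q be real Hilbert spaces, a : V×V → ℝ a symmetric bilinear form that is continuous with constant C_V and coercive with constant α_V > 0, b : W×W → ℝ a bilinear form satisfying c_K‖w‖² ≤ b(w,w) ≤ C_K‖w‖² for all w ∈ W, d : V×Q → ℝ a continuous bilinear form satisfying the inf-sup condition inf_{p∈Q} sup_{v∈V} d(v,p)/(‖v‖_V ‖p‖_Q) = β_V > 0, and e : W×Q → ℝ a continuous bilinear form. Suppose τ > 0, and define B(u,w,p; v,r,q) = a(u,v) − d(v,p) + τ b(w,r) − τ e(r,p) − d(u,q) − τ e(w,q). Then for every (u,w,p) there exists (v,r,q) with B(u,w,p;v,r,q) ≥ γ (‖u‖_V² + τ‖w‖_W² + τ²‖e-norm of w‖² + ‖p‖_Q²), where in the abstract setting e(w,q) = ⟨Ew, q⟩_Q for a bounded operator E : W → Q and the τ² term is τ²‖Ew‖_Q², with γ > 0 depending only on α_V, C_V, β_V, c_K (and not on τ). -/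
import Mathlib


open scoped RealInnerProductSpace

/-- Uniform inf-sup stability of the composite bilinear form `B` for the abstract
three-field Biot discretization: displacement space `V`, Darcy velocity space `W`,
pressure space `Q`, with `e(w,q) = ⟪E w, q⟫_Q` for a bounded operator `E : W → Q`. -/
theorem composite_infsup
    {V W Q : Type*}
    [NormedAddCommGroup V] [InnerProductSpace ℝ V]
    [NormedAddCommGroup W] [InnerProductSpace ℝ W]
    [NormedAddCommGroup Q] [InnerProductSpace ℝ Q]
    (a : V →ₗ[ℝ] V →ₗ[ℝ] ℝ) (b : W →ₗ[ℝ] W →ₗ[ℝ] ℝ)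
    (d : V →ₗ[ℝ] Q →ₗ[ℝ] ℝ) (E : W →L[ℝ] Q)
    (CV αV cK CK βV : ℝ)
    (hCV : 0 < CV) (hαV : 0 < αV) (hcK : 0 < cK) (hCK : 0 < CK) (hβV : 0 < βV)
    (ha_symm : ∀ u v : V, a u v = a v u)
    (ha_cont : ∀ u v : V, |a u v| ≤ CV * ‖u‖ * ‖v‖)
    (ha_coer : ∀ u : V, αV * ‖u‖ ^ 2 ≤ a u u)
    (hb_bounds : ∀ w : W, cK * ‖w‖ ^ 2 ≤ b w w ∧ b w w ≤ CK * ‖w‖ ^ 2)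
    (hd_cont : ∃ Cd : ℝ, ∀ (v : V) (p : Q), |d v p| ≤ Cd * ‖v‖ * ‖p‖)
    (hd_infsup : ∀ p : Q, ∃ h : V, βV * ‖p‖ ^ 2 ≤ d h p ∧ ‖h‖ = ‖p‖) :
    ∃ γ : ℝ, 0 < γ ∧ ∀ τ : ℝ, 0 < τ → ∀ (u : V) (w : W) (p : Q),
      ∃ (v : V) (r : W) (q : Q),
        γ * (‖u‖ ^ 2 + τ * ‖w‖ ^ 2 + τ ^ 2 * ‖E w‖ ^ 2 + ‖p‖ ^ 2) ≤
          a u v - d v p + τ * b w r - τ * ⟪E r, p⟫ - d u q - τ * ⟪E w, q⟫ := by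
  obtain ⟨Cd, hCd⟩ := hd_cont
  set C : ℝ := max Cd 1 with hCdef
  have hC1 : (1:ℝ) ≤ C := le_max_right _ _
  have hC0 : 0 < C := lt_of_lt_of_le one_pos hC1
  have hd' : ∀ (v : V) (p : Q), |d v p| ≤ C * ‖v‖ * ‖p‖ := by
    intro v p
    refine (hCd v p).trans ?_
    exact mul_le_mul_of_nonneg_right
      (mul_le_mul_of_nonneg_right (le_max_left _ _) (norm_nonneg _)) (norm_nonneg _)
  set θ₁ : ℝ := αV * βV / (2 * CV ^ 2) with hθ₁def
  set θ₂ : ℝ := αV / (2 * C ^ 2) with hθ₂def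
  have hθ₁pos : 0 < θ₁ := by positivity
  have hθ₂pos : 0 < θ₂ := by positivity
  set γ : ℝ := min (min (αV / 2) cK) (min (θ₁ * βV / 2) (θ₂ / 2)) with hγdef
  have hγpos : 0 < γ := by
    simp only [hγdef, lt_min_iff]
    refine ⟨⟨by positivity, hcK⟩, by positivity, by positivity⟩
  refine ⟨γ, hγpos, ?_⟩
  intro τ hτ u w p
  obtain ⟨h, hdh, hhp⟩ := hd_infsup p
  refine ⟨u - θ₁ • h, w, -(p + (θ₂ * τ) • E w), ?_⟩
  -- expand the bilinear form
  have hexpand :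
      a u (u - θ₁ • h) - d (u - θ₁ • h) p + τ * b w w - τ * ⟪E w, p⟫
        - d u (-(p + (θ₂ * τ) • E w)) - τ * ⟪E w, -(p + (θ₂ * τ) • E w)⟫
      = a u u - θ₁ * a u h + θ₁ * d h p + τ * b w w + θ₂ * τ * d u (E w)
        + θ₂ * τ ^ 2 * ‖E w‖ ^ 2 := by
    have hinner : ⟪E w, E w⟫ = ‖E w‖ ^ 2 := real_inner_self_eq_norm_sq (E w)
    simp only [map_sub, map_smul, map_neg, map_add, LinearMap.sub_apply,
      LinearMap.smul_apply, smul_eq_mul, inner_neg_right, inner_add_right,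
      inner_smul_right, real_inner_smul_right, hinner]
    ring
  rw [hexpand]
  -- basic estimates
  have e1 : αV * ‖u‖ ^ 2 ≤ a u u := ha_coer u
  have e2 : θ₁ * a u h ≤ θ₁ * (CV * ‖u‖ * ‖p‖) := by
    refine mul_le_mul_of_nonneg_left ?_ hθ₁pos.le
    calc a u h ≤ |a u h| := le_abs_self _
      _ ≤ CV * ‖u‖ * ‖h‖ := ha_cont u h
      _ = CV * ‖u‖ * ‖p‖ := by rw [hhp]
  have e3 : θ₁ * (βV * ‖p‖ ^ 2) ≤ θ₁ * d h p := mul_le_mul_of_nonneg_left hdh hθ₁pos.le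
  have e4 : τ * (cK * ‖w‖ ^ 2) ≤ τ * b w w :=
    mul_le_mul_of_nonneg_left (hb_bounds w).1 hτ.le
  have e5 : -(C * ‖u‖ * ‖E w‖) ≤ d u (E w) := neg_abs_le _ |>.trans' (by
    have := hd' u (E w)
    linarith [neg_abs_le (d u (E w))])
  have e5' : -(θ₂ * τ * (C * ‖u‖ * ‖E w‖)) ≤ θ₂ * τ * d u (E w) := by
    have := mul_le_mul_of_nonneg_left e5 (by positivity : (0:ℝ) ≤ θ₂ * τ)
    linarith
  -- Young inequalities
  have young1 : θ₁ * (CV * ‖u‖ * ‖p‖) ≤ αV / 4 * ‖u‖ ^ 2 + θ₁ * βV / 2 * ‖p‖ ^ 2 := by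
    have hα : αV / 4 = θ₁ * CV ^ 2 / (2 * βV) := by
      rw [hθ₁def]; field_simp; ring
    have hsq : 0 ≤ θ₁ / (2 * βV) * (βV * ‖p‖ - CV * ‖u‖) ^ 2 := by positivity
    have hid : θ₁ / (2 * βV) * (βV * ‖p‖ - CV * ‖u‖) ^ 2
        = θ₁ * βV / 2 * ‖p‖ ^ 2 - θ₁ * (CV * ‖u‖ * ‖p‖) + θ₁ * CV ^ 2 / (2 * βV) * ‖u‖ ^ 2 := by
      field_simp; ring
    rw [hα]; linarith [hid ▸ hsq]
  have young2 : θ₂ * τ * (C * ‖u‖ * ‖E w‖) ≤ αV / 4 * ‖u‖ ^ 2 + θ₂ / 2 * (τ ^ 2 * ‖E w‖ ^ 2) := by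
    have hα : αV / 4 = θ₂ * C ^ 2 / 2 := by
      rw [hθ₂def]; field_simp; ring
    have hsq : 0 ≤ θ₂ / 2 * (C * ‖u‖ - τ * ‖E w‖) ^ 2 := by positivity
    have hid : θ₂ / 2 * (C * ‖u‖ - τ * ‖E w‖) ^ 2
        = θ₂ * C ^ 2 / 2 * ‖u‖ ^ 2 - θ₂ * τ * (C * ‖u‖ * ‖E w‖) + θ₂ / 2 * (τ ^ 2 * ‖E w‖ ^ 2) := by
      ring
    rw [hα]; linarith [hid ▸ hsq]
  -- γ bounds
  have hγ1 : γ ≤ αV / 2 := (min_le_left _ _).trans (min_le_left _ _)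
  have hγ2 : γ ≤ cK := (min_le_left _ _).trans (min_le_right _ _)
  have hγ3 : γ ≤ θ₁ * βV / 2 := (min_le_right _ _).trans (min_le_left _ _)
  have hγ4 : γ ≤ θ₂ / 2 := (min_le_right _ _).trans (min_le_right _ _)
  have g1 : γ * ‖u‖ ^ 2 ≤ αV / 2 * ‖u‖ ^ 2 :=
    mul_le_mul_of_nonneg_right hγ1 (sq_nonneg _)
  have g2 : γ * (τ * ‖w‖ ^ 2) ≤ cK * (τ * ‖w‖ ^ 2) :=
    mul_le_mul_of_nonneg_right hγ2 (by positivity)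
  have g3 : γ * (τ ^ 2 * ‖E w‖ ^ 2) ≤ θ₂ / 2 * (τ ^ 2 * ‖E w‖ ^ 2) :=
    mul_le_mul_of_nonneg_right hγ4 (by positivity)
  have g4 : γ * ‖p‖ ^ 2 ≤ θ₁ * βV / 2 * ‖p‖ ^ 2 :=
    mul_le_mul_of_nonneg_right hγ3 (sq_nonneg _)
  linarith [e1, e2, e3, e4, e5', young1, young2, g1, g2, g3, g4]
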